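/- arXiv:math/0007088 — 2 statements merged into one kernel-verified Lean document; each statement's English description precedes it below -/
import Mathlib

section
/- Every subgroup H of (Z/3)^4 with |H|^2 = |(Z/3)^4| (i.e., |H| = 9) contains a nonzero element (a,b,c,d) with E(a,b,c,d) > 0, where E(a,b,c,d) = ā + b̄ + c̄ + d̄ - (b+c)̄ and x̄ = 1 if x ≠ 0, else 0. -/
noncomputable def bar (x : ZMod 3) : ℤ := if x ≠ 0 then 1 else 0

noncomputable def E (x : Fin 4 → ZMod 3) : ℤ :=
  bar (x 0) + bar (x 1) + bar (x 2) + bar (x 3) - bar (x 1 + x 2)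

lemma E_le_zero {x : Fin 4 → ZMod 3} (h : E x ≤ 0) : x 0 = 0 ∧ x 3 = 0 := by
  simp only [E, bar, ne_eq, ite_not] at h
  split_ifs at h with h1 h2 h3 h4 h5 <;> simp_all

def K : AddSubgroup (Fin 4 → ZMod 3) where
  carrier := {x | x 0 = 0 ∧ x 3 = 0}
  add_mem' := by intro a b ha hb; simp_all [Pi.add_apply]
  zero_mem' := by simp
  neg_mem' := by intro a ha; simp_all [Pi.neg_apply]

theorem stmt_3 (H : AddSubgroup (Fin 4 → ZMod 3)) (hH : Nat.card H ^ 2 = Nat.card (Fin 4 → ZMod 3)) :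
    ∃ x ∈ H, x ≠ 0 ∧ E x > 0 := by
  by_contra hcon
  push_neg at hcon
  have hle : H ≤ K := by
    intro x hx
    rcases eq_or_ne x 0 with rfl | hne
    · exact ⟨rfl, rfl⟩
    · exact E_le_zero (hcon x hx hne)
  have hcard81 : Nat.card (Fin 4 → ZMod 3) = 81 := by
    rw [Nat.card_eq_fintype_card]; decide
  have hcardK : Nat.card K = 9 := by
    have h1 : Nat.card K = Nat.card {x : Fin 4 → ZMod 3 // x 0 = 0 ∧ x 3 = 0} :=
      Nat.card_congr (Equiv.refl _)
    rw [h1, Nat.card_eq_fintype_card]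
    decide
  have hcardH : Nat.card H = 9 := by
    have : Nat.card H ^ 2 = 9 ^ 2 := by rw [hH, hcard81]; norm_num
    exact Nat.pow_left_injective (by norm_num) this
  have hKH : H = K := AddSubgroup.eq_of_le_of_card_ge hle (by rw [hcardK, hcardH])
  have hv : (![0,1,1,0] : Fin 4 → ZMod 3) ∈ H := by
    rw [hKH]; exact ⟨rfl, rfl⟩
  have := hcon _ hv (by intro h; have := congrFun h 1; simp at this)
  simp [E, bar] at this
  split_ifs at this <;> omega
end

section
/- Let f : (Z/3)^4 → ℚ be any function with f(x) = f(-x) and suppose f is bounded below by -C for some C > 0. Define g(x) = f(x) + 2·E(x)·s where E(a,b,c,d) = ā + b̄ + c̄ + d̄ - (b+c)̄ (with x̄ = 1 iff x ≠ 0) and s > C/2 is rational. Then for every subgroup H of (Z/3)^4 of order 9, there exists a nonzero x ∈ H with g(x) > 0. -/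
/-!
The weight `E` is nonnegative and vanishes at only five points of `(ZMod 3)^4`, so a subgroup of
order 9 contains some `x` with `E x ≥ 1`; such an `x` is nonzero and
`g x ≥ -C + 2 * s > 0`.
-/

theorem E_nonneg : ∀ x : Fin 4 → ZMod 3, 0 ≤ E x := by decide

theorem E_zero : E 0 = 0 := by decide

/-- `E x = 0` forces `x 0 = x 3 = 0` and at most one of `x 1`, `x 2` nonzero. -/
theorem ncard_setOf_E_eq_zero : {x : Fin 4 → ZMod 3 | E x = 0}.ncard = 5 := by
  rw [Set.ncard_eq_toFinset_card']
  decide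

theorem stmt_4_general (f : (Fin 4 → ZMod 3) → ℚ) (C : ℚ) (hC : 0 < C)
    (hbd : ∀ x, -C ≤ f x)
    (s : ℚ) (hs : C / 2 < s)
    (g : (Fin 4 → ZMod 3) → ℚ) (hg : ∀ x, g x = f x + 2 * (E x : ℚ) * s)
    (H : AddSubgroup (Fin 4 → ZMod 3)) (hH : Nat.card H = 9) :
    ∃ x ∈ H, x ≠ 0 ∧ 0 < g x := by
  have hcard : {x | E x = 0}.ncard < (H : Set (Fin 4 → ZMod 3)).ncard := by
    rw [ncard_setOf_E_eq_zero, ← Nat.card_coe_set_eq, SetLike.coe_sort_coe, hH]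
    decide
  obtain ⟨x, hxH, hx⟩ := Set.exists_mem_notMem_of_ncard_lt_ncard hcard
  have hE : (1 : ℚ) ≤ E x := by
    exact_mod_cast (E_nonneg x).lt_of_ne (Ne.symm hx)
  refine ⟨x, hxH, fun h0 => hx (h0 ▸ E_zero), ?_⟩
  rw [hg]
  nlinarith [hbd x]

theorem stmt_4 (f : (Fin 4 → ZMod 3) → ℚ) (C : ℚ) (hC : 0 < C)
    (hsym : ∀ x, f (-x) = f x) (hbd : ∀ x, -C ≤ f x)
    (s : ℚ) (hs : C / 2 < s)
    (g : (Fin 4 → ZMod 3) → ℚ) (hg : ∀ x, g x = f x + 2 * (E x : ℚ) * s)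
    (H : AddSubgroup (Fin 4 → ZMod 3)) (hH : Nat.card H = 9) :
    ∃ x ∈ H, x ≠ 0 ∧ 0 < g x :=
  stmt_4_general f C hC hbd s hs g hg H hH
end
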